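/- Let n ≥ 2. Let a denote the word obtained from the reflection of τ_1⋯τ_{2^{n−2}} by increasing its last digit by 1, and let b denote the word obtained from the reflection of τ_1⋯τ_{2^{n−1}} by increasing its last digit by 1. Then for every integer k ≥ 0, the infinite sequence τ_1⋯τ_{2^{n−2}} a^k b^∞ (the word τ_1⋯τ_{2^{n−2}}, followed by k copies of a, followed by the periodic repetition of b) belongs to U_{q_n}'. -/

import Mathlib

open Filter Topology

noncomputable section

/-- The value `Σ_{i≥0} d i / q^(i+1)` of a (0-indexed) digit sequence `d` in base `q`;
this corresponds to `((d_i)_{i≥1})_q` with `d_i = d (i-1)`. -/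
def seqVal (q : ℝ) (d : ℕ → ℕ) : ℝ := ∑' i : ℕ, (d i : ℝ) / q ^ (i + 1)

/-- `d` is a `q`-expansion of `x` with digits in `{0,1}`. -/
def IsExpansion (q x : ℝ) (d : ℕ → ℕ) : Prop :=
  (∀ i, d i ≤ 1) ∧ x = seqVal q d

/-- `x` has a unique `q`-expansion. -/
def HasUniqueExpansion (q x : ℝ) : Prop := ∃! d : ℕ → ℕ, IsExpansion q x d

/-- The set `U(x)` of univoque bases of `x`. -/
def UBases (x : ℝ) : Set ℝ := {q | 1 < q ∧ q < 2 ∧ HasUniqueExpansion q x}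

/-- `q_s(x) = inf U(x)`. -/
def qs (x : ℝ) : ℝ := sInf (UBases x)

/-- The univoque set `U_q` of `x ∈ [0, 1/(q-1)]` with a unique `q`-expansion. -/
def Uset (q : ℝ) : Set ℝ :=
  {x | x ∈ Set.Icc 0 (1 / (q - 1)) ∧ HasUniqueExpansion q x}

/-- The set `U_q'` of digit sequences which are the unique `q`-expansion of their value. -/
def USeq (q : ℝ) : Set (ℕ → ℕ) :=
  {d | (∀ i, d i ≤ 1) ∧ ∀ e : ℕ → ℕ, IsExpansion q (seqVal q d) e → e = d}

/-- The Thue–Morse sequence: `τ 0 = 0`, `τ (2n) = τ n`, `τ (2n+1) = 1 - τ n`. -/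
def IsThueMorse (τ : ℕ → ℕ) : Prop :=
  τ 0 = 0 ∧ (∀ n, τ (2 * n) = τ n) ∧ ∀ n, τ (2 * n + 1) = 1 - τ n

/-- `q` is the Komornik–Loreti constant: the base in `(1,2)` with `1 = Σ_{i≥1} τ_i q^{-i}`. -/
def IsKL (τ : ℕ → ℕ) (q : ℝ) : Prop :=
  1 < q ∧ q < 2 ∧ (1 : ℝ) = ∑' i : ℕ, (τ (i + 1) : ℝ) / q ^ (i + 1)

/-- `Q` is the sequence of bases `q_n`: `Q 0 = 1` and for `n ≥ 1`, `Q n` is the root in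
`(1,2)` of `1 = Σ_{i=1}^{2^n} τ_i q^{-i}`. -/
def IsBaseSeq (τ : ℕ → ℕ) (Q : ℕ → ℝ) : Prop :=
  Q 0 = 1 ∧ ∀ n, 1 ≤ n → 1 < Q n ∧ Q n < 2 ∧
    (1 : ℝ) = ∑ i ∈ Finset.range (2 ^ n), (τ (i + 1) : ℝ) / (Q n) ^ (i + 1)

/-- `D_n = ⋃_{q ∈ (q_{n-1}, q_n]} U_q`. -/
def D (Q : ℕ → ℝ) (n : ℕ) : Set ℝ := ⋃ q ∈ Set.Ioc (Q (n - 1)) (Q n), Uset q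

/-- The golden ratio. -/
def qG : ℝ := (1 + Real.sqrt 5) / 2

/-- Strict lexicographical order on digit sequences. -/
def seqLt (c d : ℕ → ℕ) : Prop := ∃ n, (∀ i, i < n → c i = d i) ∧ c n < d n

/-- The word `τ_1 ⋯ τ_m`. -/
def tmPrefix (τ : ℕ → ℕ) (m : ℕ) : List ℕ := (List.range m).map fun i => τ (i + 1)

/-- `w⁻`: decrease the last digit of a word by 1. -/
def lastDec (w : List ℕ) : List ℕ := w.dropLast ++ [w.getLastD 0 - 1]

/-- `w⁺`: increase the last digit of a word by 1. -/
def lastInc (w : List ℕ) : List ℕ := w.dropLast ++ [w.getLastD 0 + 1]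

/-- The reflection of a word. -/
def reflect (w : List ℕ) : List ℕ := w.map fun d => 1 - d

/-- The infinite sequence given by the prefix `p` followed by periodic repetition of `w`. -/
def prefPeriodic (p w : List ℕ) : ℕ → ℕ := fun j =>
  if j < p.length then p.getD j 0 else w.getD ((j - p.length) % w.length) 0

/-- `z_n = ((τ_1⋯τ_{2^{n-1}})(τ_{2^{n-1}+1}⋯τ_{2^n})^∞)_{q_n}`. -/
def zVal (τ : ℕ → ℕ) (Q : ℕ → ℝ) (n : ℕ) : ℝ :=
  seqVal (Q n) (prefPeriodic (tmPrefix τ (2 ^ (n - 1)))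
    ((List.range (2 ^ (n - 1))).map fun i => τ (2 ^ (n - 1) + (i + 1))))

/-- `z_{1,k} = Σ_{i=1}^k q_G^{-i} + 1/(q_G^k (q_G^2 - 1))`. -/
def z1 (k : ℕ) : ℝ :=
  (∑ i ∈ Finset.range k, 1 / qG ^ (i + 1)) + 1 / (qG ^ k * (qG ^ 2 - 1))

/-- The sequence `τ_1⋯τ_{2^{n-2}} a^k b^∞` where `a = (overline{τ_1⋯τ_{2^{n-2}}})⁺`
and `b = (overline{τ_1⋯τ_{2^{n-1}}})⁺`. -/
def stmt8Seq (τ : ℕ → ℕ) (n k : ℕ) : ℕ → ℕ :=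
  prefPeriodic
    (tmPrefix τ (2 ^ (n - 2)) ++
      (List.replicate k (lastInc (reflect (tmPrefix τ (2 ^ (n - 2)))))).flatten)
    (lastInc (reflect (tmPrefix τ (2 ^ (n - 1)))))

/-!
By the lexicographic characterisation of unique expansions, a `0`-`1` sequence `d` is the unique
`q`-expansion of its value as soon as every tail of `d` that follows a digit `0`, and the
reflection of every tail that follows a digit `1`, is lexicographically smaller than the
quasi-greedy expansion `α` of `1` in base `q`: the values of all these tails are then `< 1`, which
is proved by a supremum argument, and this rules out any other expansion at its first differing
digit. For `q = q_n` one has `α = (τ_1 ⋯ τ_{2^n}⁻)^∞`.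

With `m = 2^{n-2}` we have `a = τ_{m+1} ⋯ τ_{2m}` and `b = τ_{2m+1} ⋯ τ_{4m}`, so after the prefix
`τ_1 ⋯ τ_m` the sequence is a concatenation of blocks `τ_{2^s+1} ⋯ τ_{2^{s+1}}` with
`s ∈ {n-2, n-1}` nondecreasing. A tail therefore starts with a suffix of `τ_1 ⋯ τ_{2^s}` or of its
reflection, followed by the start of a block, and the comparison with `α` reduces to a classical
property of the Thue–Morse word: a proper suffix of `τ_1 ⋯ τ_{2^l}` (or its reflection) lies
lexicographically below `τ_1 τ_2 ⋯` unless it is a prefix `τ_1 ⋯ τ_{2^s}` (up to its last digit),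
which is proved by induction on `l`.
-/

section SeqVal

variable {q : ℝ} (hq : 1 < q)
include hq

theorem summable_inv_pow_succ : Summable fun i : ℕ => (1 : ℝ) / q ^ (i + 1) := by
  have hq' : q⁻¹ < 1 := inv_lt_one_of_one_lt₀ hq
  refine ((summable_geometric_of_lt_one (by positivity) hq').mul_left q⁻¹).congr fun i => ?_
  rw [← pow_succ', inv_pow, one_div]

theorem tsum_inv_pow_succ : ∑' i : ℕ, (1 : ℝ) / q ^ (i + 1) = 1 / (q - 1) := by
  have hq' : q⁻¹ < 1 := inv_lt_one_of_one_lt₀ hq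
  have h : ∀ i : ℕ, (1 : ℝ) / q ^ (i + 1) = q⁻¹ * q⁻¹ ^ i := fun i => by
    rw [← pow_succ', inv_pow, one_div]
  rw [tsum_congr h, tsum_mul_left, tsum_geometric_of_lt_one (by positivity) hq']
  have : q - 1 ≠ 0 := by linarith
  field_simp

theorem summable_digits {d : ℕ → ℕ} (hd : ∀ i, d i ≤ 1) :
    Summable fun i => (d i : ℝ) / q ^ (i + 1) :=
  (summable_inv_pow_succ hq).of_nonneg_of_le (fun i => by positivity) fun i =>
    div_le_div_of_nonneg_right (by exact_mod_cast hd i) (by positivity)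

theorem seqVal_nonneg (d : ℕ → ℕ) : 0 ≤ seqVal q d := by
  have : 0 < q := by linarith
  exact tsum_nonneg fun i => by positivity

theorem seqVal_add_seqVal_reflect {d : ℕ → ℕ} (hd : ∀ i, d i ≤ 1) :
    seqVal q d + seqVal q (fun i => 1 - d i) = 1 / (q - 1) := by
  rw [seqVal, seqVal, ← (summable_digits hq hd).tsum_add
    (summable_digits hq fun i => Nat.sub_le 1 (d i)), ← tsum_inv_pow_succ hq]
  refine tsum_congr fun i => ?_
  rw [← add_div, Nat.cast_sub (hd i)]
  ring

theorem seqVal_le {d : ℕ → ℕ} (hd : ∀ i, d i ≤ 1) : seqVal q d ≤ 1 / (q - 1) := by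
  have := seqVal_add_seqVal_reflect hq hd
  have := seqVal_nonneg hq fun i => 1 - d i
  linarith

theorem seqVal_eq_sum_add {d : ℕ → ℕ} (hd : ∀ i, d i ≤ 1) (j : ℕ) :
    seqVal q d = ∑ p ∈ Finset.range j, (d p : ℝ) / q ^ (p + 1) +
      seqVal q (fun p => d (j + p)) / q ^ j := by
  have : q ≠ 0 := by positivity
  rw [seqVal, ← (summable_digits hq hd).sum_add_tsum_nat_add j, seqVal, ← tsum_div_const]
  congr 1
  refine tsum_congr fun i => ?_
  rw [add_comm i j, show j + i + 1 = j + (i + 1) by ring, pow_add]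
  field_simp

end SeqVal

section Criterion

variable {q : ℝ} (hq : 1 < q)
include hq

theorem seqVal_le_sum_sub_of_lt {c A : ℕ → ℕ} (hc : ∀ i, c i ≤ 1) {j : ℕ}
    (hagree : ∀ p < j, c p = A p) (hlt : c j < A j) :
    seqVal q c ≤ ∑ p ∈ Finset.range (j + 1), (A p : ℝ) / q ^ (p + 1) -
      (1 - seqVal q (fun p => c (j + 1 + p))) / q ^ (j + 1) := by
  have hcj : (c j : ℝ) ≤ A j - 1 := by
    have : (c j : ℝ) + 1 ≤ A j := by exact_mod_cast Nat.succ_le_of_lt hlt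
    linarith
  have hq' : 0 < q ^ (j + 1) := by positivity
  rw [seqVal_eq_sum_add hq hc (j + 1), Finset.sum_range_succ, Finset.sum_range_succ,
    Finset.sum_congr rfl fun p hp => by rw [hagree p (Finset.mem_range.mp hp)]]
  have := div_le_div_of_nonneg_right hcj hq'.le
  have : ((A j : ℝ) - 1) / q ^ (j + 1) = A j / q ^ (j + 1) - 1 / q ^ (j + 1) := by ring
  have : (1 - seqVal q (fun p => c (j + 1 + p))) / q ^ (j + 1) =
      1 / q ^ (j + 1) - seqVal q (fun p => c (j + 1 + p)) / q ^ (j + 1) := by ring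
  linarith

theorem sum_lt_seqVal {A : ℕ → ℕ} (hA : ∀ i, A i ≤ 1) {J j : ℕ} (hj : J ≤ j) (hAj : A j = 1) :
    ∑ p ∈ Finset.range J, (A p : ℝ) / q ^ (p + 1) < seqVal q A := by
  have : 0 < q := by linarith
  calc ∑ p ∈ Finset.range J, (A p : ℝ) / q ^ (p + 1)
      < ∑ p ∈ Finset.range (j + 1), (A p : ℝ) / q ^ (p + 1) :=
        Finset.sum_lt_sum_of_subset (Finset.range_subset_range.mpr (by omega))
          (Finset.self_mem_range_succ j) (by simp; omega) (by rw [hAj]; positivity)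
          fun _ _ _ => by positivity
    _ ≤ seqVal q A := (summable_digits hq hA).sum_le_tsum _ fun _ _ => by positivity

section

variable {A : ℕ → ℕ} {S : Set (ℕ → ℕ)} (hA : ∀ i, A i ≤ 1) (hAval : seqVal q A ≤ 1)
  (hS : ∀ c ∈ S, ∀ i, c i ≤ 1)
  (hSlt : ∀ c ∈ S, ∃ j, (∀ p < j, c p = A p) ∧ c j < A j ∧ (fun p => c (j + 1 + p)) ∈ S)
include hA hAval hS hSlt

/-- If `V = sup_{c ∈ S} seqVal q c` exceeded `1`, splitting each `c` at its first descent below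
`A` would give `V - 1 ≤ (V - 1) / q`. -/
theorem seqVal_le_one_of_forall_seqLt : ∀ c ∈ S, seqVal q c ≤ 1 := by
  have hq0 : 0 < q := by linarith
  have hbdd : BddAbove (seqVal q '' S) := ⟨1 / (q - 1), by
    rintro _ ⟨c, hc, rfl⟩; exact seqVal_le hq (hS c hc)⟩
  set V := sSup (seqVal q '' S)
  have hstep : ∀ c ∈ S, ∃ j, seqVal q c ≤ 1 + (V - 1) / q ^ (j + 1) := fun c hc => by
    obtain ⟨j, hagree, hlt, hshift⟩ := hSlt c hc
    have h1 := seqVal_le_sum_sub_of_lt hq (hS c hc) hagree hlt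
    have h2 : seqVal q (fun p => c (j + 1 + p)) ≤ V := le_csSup hbdd ⟨_, hshift, rfl⟩
    have h3 := (summable_digits hq hA).sum_le_tsum (Finset.range (j + 1)) fun i _ => by positivity
    have h4 := div_le_div_of_nonneg_right (sub_le_sub_left h2 1) (by positivity : 0 ≤ q ^ (j + 1))
    have h5 : (1 - V) / q ^ (j + 1) = -((V - 1) / q ^ (j + 1)) := by ring
    refine ⟨j, by rw [seqVal] at hAval; linarith⟩
  have hV : V ≤ 1 := by
    by_contra! hV
    have hle : V ≤ 1 + (V - 1) / q := Real.sSup_le (fun _ ⟨c, hc, hcV⟩ => by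
      obtain ⟨j, hj⟩ := hstep c hc
      have : (V - 1) / q ^ (j + 1) ≤ (V - 1) / q :=
        div_le_div_of_nonneg_left (by linarith) (by linarith) (le_self_pow₀ hq.le (by omega))
      rw [← hcV]; linarith) (by have : 0 < (V - 1) / q := div_pos (by linarith) hq0; linarith)
    have : (V - 1) / q < V - 1 := div_lt_self (by linarith) hq
    linarith
  intro c hc
  obtain ⟨j, hj⟩ := hstep c hc
  have : (V - 1) / q ^ (j + 1) ≤ 0 := div_nonpos_of_nonpos_of_nonneg (by linarith) (by positivity)
  linarith

theorem seqVal_lt_one_of_forall_seqLt (hAinf : ∀ j, ∃ j', j ≤ j' ∧ A j' = 1) :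
    ∀ c ∈ S, seqVal q c < 1 := by
  intro c hc
  obtain ⟨j, hagree, hlt, hshift⟩ := hSlt c hc
  obtain ⟨j', hj', hAj'⟩ := hAinf (j + 1)
  have h1 := seqVal_le_sum_sub_of_lt hq (hS c hc) hagree hlt
  have h2 := seqVal_le_one_of_forall_seqLt hq hA hAval hS hSlt _ hshift
  have h3 := sum_lt_seqVal hq hA hj' hAj'
  have h4 : 0 ≤ (1 - seqVal q (fun p => c (j + 1 + p))) / q ^ (j + 1) :=
    div_nonneg (by linarith) (by positivity)
  linarith

end

theorem head_eq_of_seqVal_eq {x y : ℕ → ℕ} (hx : ∀ i, x i ≤ 1) (hy : ∀ i, y i ≤ 1)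
    (hxy : seqVal q x = seqVal q y)
    (hy0 : y 0 = 0 → seqVal q (fun p => y (1 + p)) < 1)
    (hy1 : y 0 = 1 → seqVal q (fun p => 1 - y (1 + p)) < 1) :
    x 0 = y 0 ∧ seqVal q (fun p => x (1 + p)) = seqVal q (fun p => y (1 + p)) := by
  have hq0 : q ≠ 0 := by positivity
  have key : (x 0 : ℝ) + seqVal q (fun p => x (1 + p)) = y 0 + seqVal q (fun p => y (1 + p)) := by
    have := hxy
    rw [seqVal_eq_sum_add hq hx 1, seqVal_eq_sum_add hq hy 1] at this
    simp only [Finset.sum_range_one, zero_add, pow_one] at this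
    field_simp at this
    linarith
  have hx0 := seqVal_nonneg hq fun p => x (1 + p)
  rcases Nat.le_one_iff_eq_zero_or_eq_one.mp (hx 0) with h | h <;>
  rcases Nat.le_one_iff_eq_zero_or_eq_one.mp (hy 0) with h' | h' <;>
  rw [h, h'] at key <;> push_cast at key
  · exact ⟨by rw [h, h'], by linarith⟩
  · have := seqVal_le hq fun p => hx (1 + p)
    have := seqVal_add_seqVal_reflect hq fun p => hy (1 + p)
    linarith [hy1 h']
  · linarith [hy0 h']
  · exact ⟨by rw [h, h'], by linarith⟩

/-- The lexicographic condition for unique expansions at position `i` of `d`; `A` plays the role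
of the quasi-greedy expansion of `1`. -/
def LexCondAt (A d : ℕ → ℕ) (i : ℕ) : Prop :=
  (d i = 0 → seqLt (fun p => d (i + 1 + p)) A) ∧ (d i = 1 → seqLt (fun p => 1 - d (i + 1 + p)) A)

theorem mem_USeq_of_lexCondAt {A d : ℕ → ℕ} (hA : ∀ i, A i ≤ 1) (hAval : seqVal q A ≤ 1)
    (hAinf : ∀ j, ∃ j', j ≤ j' ∧ A j' = 1) (hd : ∀ i, d i ≤ 1) (hlex : ∀ i, LexCondAt A d i) :
    d ∈ USeq q := by
  set S : Set (ℕ → ℕ) := {c | ∃ i, (d i = 0 ∧ c = fun p => d (i + 1 + p)) ∨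
    (d i = 1 ∧ c = fun p => 1 - d (i + 1 + p))}
  have hS : ∀ c ∈ S, ∀ i, c i ≤ 1 := by
    rintro c ⟨i, ⟨-, rfl⟩ | ⟨-, rfl⟩⟩ p
    exacts [hd _, Nat.sub_le _ _]
  have hSlt : ∀ c ∈ S, ∃ j, (∀ p < j, c p = A p) ∧ c j < A j ∧ (fun p => c (j + 1 + p)) ∈ S := by
    rintro c ⟨i, ⟨hi, rfl⟩ | ⟨hi, rfl⟩⟩
    · obtain ⟨j, hagree, hlt⟩ := (hlex i).1 hi
      refine ⟨j, hagree, hlt, i + 1 + j, Or.inl ⟨by have := hA j; dsimp only at hlt; omega, ?_⟩⟩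
      funext p; simp only [add_assoc]
    · obtain ⟨j, hagree, hlt⟩ := (hlex i).2 hi
      refine ⟨j, hagree, hlt, i + 1 + j, Or.inr ⟨?_, ?_⟩⟩
      · have := hA j; have := hd (i + 1 + j); dsimp only at hlt; omega
      · funext p; simp only [add_assoc]
  have hlt := seqVal_lt_one_of_forall_seqLt hq hA hAval hS hSlt hAinf
  refine ⟨hd, fun e ⟨he, hval⟩ => ?_⟩
  have hstep : ∀ j, seqVal q (fun p => e (j + p)) = seqVal q (fun p => d (j + p)) →
      e j = d j ∧ seqVal q (fun p => e (j + 1 + p)) = seqVal q (fun p => d (j + 1 + p)) := by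
    intro j hj
    have := head_eq_of_seqVal_eq hq (fun p => he (j + p)) (fun p => hd (j + p)) hj
      (fun h => hlt _ ⟨j, Or.inl ⟨h, by simp only [← add_assoc]⟩⟩)
      (fun h => hlt _ ⟨j, Or.inr ⟨h, by simp only [← add_assoc]⟩⟩)
    simpa only [add_zero, ← add_assoc] using this
  have hshift : ∀ j, seqVal q (fun p => e (j + p)) = seqVal q (fun p => d (j + p)) := by
    intro j
    induction j with
    | zero => simpa only [zero_add] using hval.symm
    | succ j ih => exact (hstep j ih).2
  exact funext fun j => (hstep j (hshift j)).1

end Criterion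

namespace IsThueMorse

variable {τ : ℕ → ℕ} (hτ : IsThueMorse τ)
include hτ

theorem le_one (i : ℕ) : τ i ≤ 1 := by
  induction i using Nat.strong_induction_on with
  | _ i ih =>
    obtain ⟨h0, heven, hodd⟩ := hτ
    rcases Nat.even_or_odd' i with ⟨t, rfl | rfl⟩
    · rcases Nat.eq_zero_or_pos t with rfl | ht
      · simp [h0]
      · rw [heven]; exact ih t (by omega)
    · rw [hodd]; omega

theorem two_pow (l : ℕ) : τ (2 ^ l) = 1 := by
  induction l with
  | zero => simpa [hτ.1] using hτ.2.2 0
  | succ l ih => rw [pow_succ', hτ.2.1, ih]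

theorem two_pow_add (l i : ℕ) (hi : i < 2 ^ l) : τ (2 ^ l + i) + τ i = 1 := by
  induction l generalizing i with
  | zero =>
    obtain rfl : i = 0 := by omega
    simpa [hτ.1] using hτ.2.2 0
  | succ l ih =>
    have heven := hτ.2.1
    have hodd := hτ.2.2
    rcases Nat.even_or_odd' i with ⟨t, rfl | rfl⟩
    · rw [pow_succ', ← mul_add, heven, heven]
      exact ih _ (by rw [pow_succ'] at hi; omega)
    · have ht := ih t (by rw [pow_succ'] at hi; omega)
      rw [pow_succ', ← add_assoc, ← mul_add, hodd, hodd]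
      have := hτ.le_one (2 ^ l + t)
      omega

end IsThueMorse

/-- Every proper suffix `τ_{r+1} ⋯ τ_{2^l}` of `τ_1 ⋯ τ_{2^l}` either falls strictly below
`τ_1 τ_2 ⋯` before its last digit, or it equals `τ_1 ⋯ τ_{2^s}`. -/
def TMSuffixBelow (τ : ℕ → ℕ) (l : ℕ) : Prop :=
  ∀ r, 1 ≤ r → r < 2 ^ l →
    (∃ j, j + 1 < 2 ^ l - r ∧ (∀ i < j, τ (r + i + 1) = τ (i + 1)) ∧
      τ (r + j + 1) = 0 ∧ τ (j + 1) = 1) ∨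
    (∃ s, 2 ^ l - r = 2 ^ s ∧ ∀ i < 2 ^ s, τ (r + i + 1) = τ (i + 1))

/-- The same for the reflections of the suffixes `τ_{r+1} ⋯ τ_{2^l}`, where in the second
alternative the last digit is left out. -/
def TMReflSuffixBelow (τ : ℕ → ℕ) (l : ℕ) : Prop :=
  ∀ r < 2 ^ l,
    (∃ j, j + 1 < 2 ^ l - r ∧ (∀ i < j, τ (r + i + 1) + τ (i + 1) = 1) ∧
      τ (r + j + 1) = 1 ∧ τ (j + 1) = 1) ∨
    (∃ s, 2 ^ l - r = 2 ^ s ∧ ∀ i, i + 1 < 2 ^ s → τ (r + i + 1) + τ (i + 1) = 1)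

namespace IsThueMorse

variable {τ : ℕ → ℕ} (hτ : IsThueMorse τ)
include hτ

theorem add_sub_two_pow {l r i : ℕ} (hr : 2 ^ l ≤ r) (hi : r - 2 ^ l + i + 1 < 2 ^ l) :
    τ (r + i + 1) + τ (r - 2 ^ l + i + 1) = 1 := by
  have := hτ.two_pow_add l (r - 2 ^ l + i + 1) hi
  rwa [show 2 ^ l + (r - 2 ^ l + i + 1) = r + i + 1 by omega] at this

/-- A suffix `τ_{r+1} ⋯ τ_{2^l} = τ_1 ⋯ τ_{2^s}` is followed in `τ` by the reflection of
`τ_1 ⋯ τ_{2^s}`, whereas `τ_1 ⋯ τ_{2^s}` itself is followed by that reflection with its last digit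
increased. -/
theorem tmSuffix_append_reflect {l r s : ℕ} (hr1 : 1 ≤ r) (hs : 2 ^ l - r = 2 ^ s)
    (hagree : ∀ i < 2 ^ s, τ (r + i + 1) = τ (i + 1)) :
    (∀ i < 2 ^ (s + 1) - 1, τ (r + i + 1) = τ (i + 1)) ∧ τ (r + (2 ^ (s + 1) - 1) + 1) = 0 := by
  have hs2 : 2 ^ (s + 1) = 2 ^ s + 2 ^ s := by ring
  have hpos : 0 < 2 ^ s := Nat.two_pow_pos s
  have hadd := hτ.two_pow_add l
  refine ⟨fun i hi => ?_, ?_⟩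
  · rcases lt_or_ge i (2 ^ s) with hi' | hi'
    · exact hagree i hi'
    · have := hadd (i - 2 ^ s + 1) (by omega)
      have := hτ.two_pow_add s (i - 2 ^ s + 1) (by omega)
      rw [show r + i + 1 = 2 ^ l + (i - 2 ^ s + 1) by omega,
        show i + 1 = 2 ^ s + (i - 2 ^ s + 1) by omega]
      omega
  · have := hadd (2 ^ s) (by omega)
    have := hτ.two_pow s
    rw [show r + (2 ^ (s + 1) - 1) + 1 = 2 ^ l + 2 ^ s by omega]
    omega

theorem tmSuffixBelow_succ {l : ℕ} (h1 : TMSuffixBelow τ l) (h2 : TMReflSuffixBelow τ l) :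
    TMSuffixBelow τ (l + 1) := by
  intro r hr1 hr2
  have hl : 2 ^ (l + 1) = 2 ^ l + 2 ^ l := by ring
  have hadd := hτ.two_pow_add l
  rcases lt_trichotomy r (2 ^ l) with hr | rfl | hr
  · rcases h1 r hr1 hr with ⟨j, hj, hagree, hrj, hj1⟩ | ⟨s, hs, hagree⟩
    · exact Or.inl ⟨j, by omega, hagree, hrj, hj1⟩
    obtain ⟨hagree', hrj⟩ := hτ.tmSuffix_append_reflect hr1 hs hagree
    have hs2 : 2 ^ (s + 1) = 2 ^ s + 2 ^ s := by ring
    refine Or.inl ⟨2 ^ (s + 1) - 1, by omega, hagree', hrj, ?_⟩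
    rw [Nat.sub_add_cancel Nat.one_le_two_pow]
    exact hτ.two_pow _
  · rcases Nat.eq_zero_or_pos l with rfl | hl0
    · exact Or.inr ⟨0, by norm_num, fun i hi => by
        obtain rfl : i = 0 := by omega
        simpa using hτ.2.1 1⟩
    · have h2l := Nat.one_lt_two_pow hl0.ne'
      have h1 := hadd 1 h2l
      have hτ1 : τ 1 = 1 := hτ.two_pow 0
      refine Or.inl ⟨0, by omega, fun i hi => absurd hi (Nat.not_lt_zero i), ?_, hτ1⟩
      rw [add_zero]
      omega
  · rcases h2 (r - 2 ^ l) (by omega) with ⟨j, hj, hagree, hrj, hj1⟩ | ⟨s, hs, hagree⟩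
    · refine Or.inl ⟨j, by omega, fun i hi => ?_, ?_, hj1⟩
      · have := hagree i hi
        have := hτ.add_sub_two_pow (i := i) hr.le (by omega)
        omega
      · have := hτ.add_sub_two_pow (i := j) hr.le (by omega)
        omega
    · refine Or.inr ⟨s, by omega, fun i hi => ?_⟩
      rcases Nat.lt_or_ge (i + 1) (2 ^ s) with hi' | hi'
      · have := hagree i hi'
        have := hτ.add_sub_two_pow (i := i) hr.le (by omega)
        omega
      · rw [show r + i + 1 = 2 ^ (l + 1) by omega, show i + 1 = 2 ^ s by omega,
          hτ.two_pow, hτ.two_pow]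

theorem tmReflSuffixBelow_succ {l : ℕ} (h1 : TMSuffixBelow τ l) (h2 : TMReflSuffixBelow τ l) :
    TMReflSuffixBelow τ (l + 1) := by
  intro r hr
  have hl : 2 ^ (l + 1) = 2 ^ l + 2 ^ l := by ring
  have hadd := hτ.two_pow_add l
  rcases lt_trichotomy r (2 ^ l) with hr' | rfl | hr'
  · rcases h2 r hr' with ⟨j, hj, hagree, hrj, hj1⟩ | ⟨s, hs, hagree⟩
    · exact Or.inl ⟨j, by omega, hagree, hrj, hj1⟩
    · have := Nat.one_le_two_pow (n := s)
      refine Or.inl ⟨2 ^ s - 1, by omega, fun i hi => hagree i (by omega), ?_, ?_⟩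
      · rw [show r + (2 ^ s - 1) + 1 = 2 ^ l by omega]
        exact hτ.two_pow l
      · rw [Nat.sub_add_cancel this]
        exact hτ.two_pow s
  · exact Or.inr ⟨l, by omega, fun i hi => by
      rw [add_assoc]; exact hadd (i + 1) hi⟩
  · rcases h1 (r - 2 ^ l) (by omega) (by omega) with ⟨j, hj, hagree, hrj, hj1⟩ | ⟨s, hs, hagree⟩
    · refine Or.inl ⟨j, by omega, fun i hi => ?_, ?_, hj1⟩
      · have := hagree i hi
        have := hτ.add_sub_two_pow (i := i) hr'.le (by omega)
        omega
      · have := hτ.add_sub_two_pow (i := j) hr'.le (by omega)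
        omega
    · refine Or.inr ⟨s, by omega, fun i hi => ?_⟩
      have := hagree i (by omega)
      have := hτ.add_sub_two_pow (i := i) hr'.le (by omega)
      omega

theorem tmSuffixBelow_and_tmReflSuffixBelow (l : ℕ) :
    TMSuffixBelow τ l ∧ TMReflSuffixBelow τ l := by
  induction l with
  | zero =>
    refine ⟨fun r hr1 hr2 => absurd hr2 (by simp; omega), fun r hr => Or.inr ⟨0, ?_, ?_⟩⟩
    · simp_all
    · intro i hi; simp at hi
  | succ l ih => exact ⟨hτ.tmSuffixBelow_succ ih.1 ih.2, hτ.tmReflSuffixBelow_succ ih.1 ih.2⟩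

end IsThueMorse

/-- `(τ_1 ⋯ τ_N⁻)^∞`; for `N = 2^n` this is the quasi-greedy expansion of `1` in base `q_n`. -/
def quasiGreedyTM (τ : ℕ → ℕ) (N : ℕ) : ℕ → ℕ :=
  fun p => if p % N = N - 1 then 0 else τ (p % N + 1)

theorem quasiGreedyTM_of_lt {τ : ℕ → ℕ} {N p : ℕ} (hp : p + 1 < N) :
    quasiGreedyTM τ N p = τ (p + 1) := by
  rw [quasiGreedyTM, Nat.mod_eq_of_lt (by omega), if_neg (by omega)]

theorem seqLt_quasiGreedyTM {τ c : ℕ → ℕ} {N j : ℕ} (hj : j + 1 < N)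
    (hagree : ∀ p < j, c p = τ (p + 1)) (hc : c j = 0) (hτj : τ (j + 1) = 1) :
    seqLt c (quasiGreedyTM τ N) :=
  ⟨j, fun p hp => by rw [hagree p hp, quasiGreedyTM_of_lt (by omega)], by
    rw [hc, quasiGreedyTM_of_lt hj, hτj]; exact Nat.one_pos⟩

namespace IsThueMorse

variable {τ c : ℕ → ℕ} (hτ : IsThueMorse τ) {n s r : ℕ}
include hτ

theorem seqLt_of_tmPrefix_lastDec (hs : s < n) (hagree : ∀ p, p + 1 < 2 ^ s → c p = τ (p + 1))
    (hc : c (2 ^ s - 1) = 0) : seqLt c (quasiGreedyTM τ (2 ^ n)) := by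
  have h1 : 1 ≤ 2 ^ s := Nat.one_le_two_pow
  have h2 : 2 ^ s < 2 ^ n := Nat.pow_lt_pow_right (by norm_num) hs
  refine seqLt_quasiGreedyTM (by omega) (fun p hp => hagree p (by omega)) hc ?_
  rw [Nat.sub_add_cancel h1]
  exact hτ.two_pow s

theorem seqLt_of_tmPrefix_append_reflect (hs : s + 1 < n) (h1 : ∀ p < 2 ^ s, c p = τ (p + 1))
    (h2 : ∀ t < 2 ^ s, c (2 ^ s + t) + τ (t + 1) = 1) : seqLt c (quasiGreedyTM τ (2 ^ n)) := by
  have hs2 : 2 ^ (s + 1) = 2 ^ s + 2 ^ s := by ring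
  have hpos : 0 < 2 ^ s := Nat.two_pow_pos s
  have hτs := hτ.two_pow s
  refine hτ.seqLt_of_tmPrefix_lastDec hs (fun p hp => ?_) ?_
  · rcases lt_or_ge p (2 ^ s) with hp' | hp'
    · exact h1 p hp'
    · have hc := h2 (p - 2 ^ s) (by omega)
      have := hτ.two_pow_add s (p - 2 ^ s + 1) (by omega)
      rw [show 2 ^ s + (p - 2 ^ s) = p by omega] at hc
      rw [show p + 1 = 2 ^ s + (p - 2 ^ s + 1) by omega]
      omega
  · have := h2 (2 ^ s - 1) (by omega)
    rw [show 2 ^ s + (2 ^ s - 1) = 2 ^ (s + 1) - 1 by omega,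
      Nat.sub_add_cancel Nat.one_le_two_pow, hτs] at this
    omega

theorem seqLt_of_tmSuffix_append_reflect (hs : s < n) (hr1 : 1 ≤ r) (hr : r < 2 ^ s)
    (h1 : ∀ p < 2 ^ s - r, c p = τ (r + p + 1))
    (h2 : ∀ t < 2 ^ s - r, c (2 ^ s - r + t) + τ (t + 1) = 1) :
    seqLt c (quasiGreedyTM τ (2 ^ n)) := by
  have hsn : 2 ^ s < 2 ^ n := Nat.pow_lt_pow_right (by norm_num) hs
  rcases (hτ.tmSuffixBelow_and_tmReflSuffixBelow s).1 r hr1 hr with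
    ⟨j, hj, hagree, hrj, hj1⟩ | ⟨σ, hσ, hagree⟩
  · refine seqLt_quasiGreedyTM (by omega) (fun p hp => ?_) ?_ hj1
    · rw [h1 p (by omega), hagree p hp]
    · rw [h1 j (by omega), hrj]
  · have hσs : σ < s := (Nat.pow_lt_pow_iff_right (a := 2) one_lt_two).1 (by omega)
    refine hτ.seqLt_of_tmPrefix_append_reflect (s := σ) (by omega) (fun p hp => ?_) (fun t ht => ?_)
    · rw [h1 p (by omega), hagree p hp]
    · rw [← hσ]; exact h2 t (by omega)

theorem seqLt_of_tmSuffix_lastDec (hs : s < n) (hr1 : 1 ≤ r) (hr : r < 2 ^ s)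
    (h1 : ∀ p, p + 1 < 2 ^ s - r → c p = τ (r + p + 1)) (h2 : c (2 ^ s - r - 1) = 0) :
    seqLt c (quasiGreedyTM τ (2 ^ n)) := by
  have hsn : 2 ^ s < 2 ^ n := Nat.pow_lt_pow_right (by norm_num) hs
  rcases (hτ.tmSuffixBelow_and_tmReflSuffixBelow s).1 r hr1 hr with
    ⟨j, hj, hagree, hrj, hj1⟩ | ⟨σ, hσ, hagree⟩
  · refine seqLt_quasiGreedyTM (by omega) (fun p hp => ?_) ?_ hj1
    · rw [h1 p (by omega), hagree p hp]
    · rw [h1 j (by omega), hrj]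
  · have hσs : σ < s := (Nat.pow_lt_pow_iff_right (a := 2) one_lt_two).1 (by omega)
    refine hτ.seqLt_of_tmPrefix_lastDec (s := σ) (by omega) (fun p hp => ?_)
      (by rw [← hσ]; exact h2)
    rw [h1 p (by omega), hagree p (by omega)]

theorem seqLt_of_reflect_tmSuffix (hs : s < n) (hr : r < 2 ^ s)
    (h : ∀ p < 2 ^ s - r, c p + τ (r + p + 1) = 1) : seqLt c (quasiGreedyTM τ (2 ^ n)) := by
  have hsn : 2 ^ s < 2 ^ n := Nat.pow_lt_pow_right (by norm_num) hs
  rcases (hτ.tmSuffixBelow_and_tmReflSuffixBelow s).2 r hr with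
    ⟨j, hj, hagree, hrj, hj1⟩ | ⟨σ, hσ, hagree⟩
  · refine seqLt_quasiGreedyTM (by omega) (fun p hp => ?_) ?_ hj1
    · have := h p (by omega)
      have := hagree p hp
      have := hτ.le_one (r + p + 1)
      omega
    · have := h j (by omega)
      omega
  · have hσs : σ ≤ s := (Nat.pow_le_pow_iff_right (a := 2) one_lt_two).1 (by omega)
    refine hτ.seqLt_of_tmPrefix_lastDec (s := σ) (by omega) (fun p hp => ?_) ?_
    · have := h p (by omega)
      have := hagree p hp
      have := hτ.le_one (r + p + 1)
      omega
    · have := h (2 ^ σ - 1) (by omega)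
      rw [show r + (2 ^ σ - 1) + 1 = 2 ^ s by omega, hτ.two_pow] at this
      omega

theorem seqLt_of_lastInc_reflect_tmSuffix_append_reflect (hs : s < n) (hr1 : 1 ≤ r) (hr : r < 2 ^ s)
    (h1 : ∀ p, p + 1 < 2 ^ s - r → c p + τ (r + p + 1) = 1) (h2 : c (2 ^ s - r - 1) = 1)
    (h3 : ∀ t < 2 ^ s - r, c (2 ^ s - r + t) + τ (t + 1) = 1) :
    seqLt c (quasiGreedyTM τ (2 ^ n)) := by
  have hsn : 2 ^ s < 2 ^ n := Nat.pow_lt_pow_right (by norm_num) hs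
  rcases (hτ.tmSuffixBelow_and_tmReflSuffixBelow s).2 r hr with
    ⟨j, hj, hagree, hrj, hj1⟩ | ⟨σ, hσ, hagree⟩
  · refine seqLt_quasiGreedyTM (by omega) (fun p hp => ?_) ?_ hj1
    · have := h1 p (by omega)
      have := hagree p hp
      have := hτ.le_one (r + p + 1)
      omega
    · have := h1 j (by omega)
      omega
  · have hσs : σ < s := (Nat.pow_lt_pow_iff_right (a := 2) one_lt_two).1 (by omega)
    refine hτ.seqLt_of_tmPrefix_append_reflect (s := σ) (by omega) (fun p hp => ?_) (fun t ht => ?_)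
    · rcases Nat.lt_or_ge (p + 1) (2 ^ σ) with hp' | hp'
      · have := h1 p (by omega)
        have := hagree p hp'
        have := hτ.le_one (r + p + 1)
        omega
      · rw [show p = 2 ^ s - r - 1 by omega, h2, show 2 ^ s - r - 1 + 1 = 2 ^ σ by omega,
          hτ.two_pow]
    · rw [← hσ]; exact h3 t (by omega)

theorem quasiGreedyTM_le_one (N i : ℕ) : quasiGreedyTM τ N i ≤ 1 := by
  unfold quasiGreedyTM
  split
  exacts [zero_le_one, hτ.le_one _]

theorem exists_quasiGreedyTM_eq_one {l : ℕ} (hl : 1 ≤ l) (j : ℕ) :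
    ∃ j', j ≤ j' ∧ quasiGreedyTM τ (2 ^ l) j' = 1 := by
  have h2 : 2 ≤ 2 ^ l := by simpa using Nat.pow_le_pow_right two_pos hl
  refine ⟨2 ^ l * j, Nat.le_mul_of_pos_left j (by omega), ?_⟩
  rw [quasiGreedyTM, Nat.mul_mod_right, if_neg (by omega)]
  exact hτ.two_pow 0

theorem seqVal_quasiGreedyTM {q : ℝ} (hq : 1 < q) {l : ℕ}
    (heq : (1 : ℝ) = ∑ i ∈ Finset.range (2 ^ l), (τ (i + 1) : ℝ) / q ^ (i + 1)) :
    seqVal q (quasiGreedyTM τ (2 ^ l)) = 1 := by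
  set N := 2 ^ l
  set X := seqVal q (quasiGreedyTM τ N)
  have hperiodic : (fun p => quasiGreedyTM τ N (N + p)) = quasiGreedyTM τ N := by
    funext p; simp only [quasiGreedyTM, Nat.add_mod_left]
  have hsum : ∑ p ∈ Finset.range N, (quasiGreedyTM τ N p : ℝ) / q ^ (p + 1) = 1 - 1 / q ^ N := by
    obtain ⟨M, hM⟩ : ∃ M, N = M + 1 := ⟨N - 1, (Nat.sub_add_cancel Nat.one_le_two_pow).symm⟩
    have hτN : τ (M + 1) = 1 := by rw [← hM]; exact hτ.two_pow l
    rw [hM, Finset.sum_range_succ] at heq ⊢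
    rw [Finset.sum_congr rfl fun p hp => by
        rw [quasiGreedyTM_of_lt (by simp at hp; omega)],
      show quasiGreedyTM τ (M + 1) M = 0 by simp [quasiGreedyTM]]
    rw [hτN] at heq
    simp only [Nat.cast_zero, Nat.cast_one, zero_div, add_zero] at heq ⊢
    linarith
  have hsplit := seqVal_eq_sum_add hq (hτ.quasiGreedyTM_le_one N) N
  rw [hperiodic, hsum] at hsplit
  have hqN : 1 < q ^ N := one_lt_pow₀ hq (by positivity)
  have hprod : (X - 1) * (1 - 1 / q ^ N) = 0 := by linear_combination hsplit
  have : 1 / q ^ N < 1 := (div_lt_one (by positivity)).mpr hqN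
  rcases mul_eq_zero.mp hprod with h | h <;> linarith

end IsThueMorse

/-- `d` carries the block `τ_{2^s+1} ⋯ τ_{2^{s+1}} = (reflection of τ_1 ⋯ τ_{2^s})⁺` at the
positions `B, …, B + 2^s - 1`. -/
def HasBlockAt (τ d : ℕ → ℕ) (B s : ℕ) : Prop := ∀ x < 2 ^ s, d (B + x) = τ (2 ^ s + x + 1)

namespace IsThueMorse

variable {τ d : ℕ → ℕ} (hτ : IsThueMorse τ) {n s s' B : ℕ}
include hτ

theorem hasBlockAt_add_eq_one (hB : HasBlockAt τ d B s) {x : ℕ} (hx : x + 1 < 2 ^ s) :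
    d (B + x) + τ (x + 1) = 1 := by
  rw [hB x (by omega), add_assoc]
  exact hτ.two_pow_add s (x + 1) hx

theorem hasBlockAt_last (hB : HasBlockAt τ d B s) : d (B + (2 ^ s - 1)) = 1 := by
  have h1 : 1 ≤ 2 ^ s := Nat.one_le_two_pow
  rw [hB _ (by omega), show 2 ^ s + (2 ^ s - 1) + 1 = 2 ^ (s + 1) by rw [pow_succ]; omega]
  exact hτ.two_pow _

theorem seqLt_reflect_of_hasBlockAt (hs : s < n) (hB : HasBlockAt τ d B s) :
    seqLt (fun p => 1 - d (B + p)) (quasiGreedyTM τ (2 ^ n)) := by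
  refine hτ.seqLt_of_tmPrefix_lastDec hs (fun p hp => ?_) (by rw [hτ.hasBlockAt_last hB])
  have := hτ.hasBlockAt_add_eq_one hB hp
  omega

theorem lexCondAt_of_lt_two_pow {μ i : ℕ} (hμ : μ ≤ s') (hs' : s' < n)
    (hd : ∀ p < 2 ^ μ, d p = τ (p + 1)) (hB : HasBlockAt τ d (2 ^ μ) s') (hi : i < 2 ^ μ) :
    LexCondAt (quasiGreedyTM τ (2 ^ n)) d i := by
  have hμs : 2 ^ μ ≤ 2 ^ s' := Nat.pow_le_pow_right (by norm_num) hμ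
  obtain hi' | hi' : i + 1 = 2 ^ μ ∨ i + 1 < 2 ^ μ := by omega
  · have hdi : d i = 1 := by rw [hd i hi, hi', hτ.two_pow]
    refine ⟨fun h => by omega, fun _ => ?_⟩
    rw [hi']
    exact hτ.seqLt_reflect_of_hasBlockAt hs' hB
  refine ⟨fun _ => ?_, fun _ => ?_⟩
  · refine hτ.seqLt_of_tmSuffix_append_reflect (s := μ) (r := i + 1) (by omega) (by omega) hi'
      (fun p hp => hd _ (by omega)) (fun t ht => ?_)
    rw [show i + 1 + (2 ^ μ - (i + 1) + t) = 2 ^ μ + t by omega]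
    exact hτ.hasBlockAt_add_eq_one hB (by omega)
  · refine hτ.seqLt_of_reflect_tmSuffix (s := μ) (r := i + 1) (by omega) hi' (fun p hp => ?_)
    rw [hd _ (by omega)]
    have := hτ.le_one (i + 1 + p + 1)
    omega

theorem lexCondAt_of_hasBlockAt {ρ : ℕ} (hss : s ≤ s') (hs' : s' < n)
    (hB : HasBlockAt τ d B s) (hB' : HasBlockAt τ d (B + 2 ^ s) s') (hρ : ρ < 2 ^ s) :
    LexCondAt (quasiGreedyTM τ (2 ^ n)) d (B + ρ) := by
  have hss' : 2 ^ s ≤ 2 ^ s' := Nat.pow_le_pow_right (by norm_num) hss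
  obtain hρ' | hρ' : ρ + 1 = 2 ^ s ∨ ρ + 1 < 2 ^ s := by omega
  · have hdi : d (B + ρ) = 1 := by rw [show ρ = 2 ^ s - 1 by omega, hτ.hasBlockAt_last hB]
    refine ⟨fun h => by omega, fun _ => ?_⟩
    rw [add_assoc, hρ']
    exact hτ.seqLt_reflect_of_hasBlockAt hs' hB'
  refine ⟨fun _ => ?_, fun _ => ?_⟩
  · refine hτ.seqLt_of_lastInc_reflect_tmSuffix_append_reflect (s := s) (r := ρ + 1) (by omega)
      (by omega) hρ' (fun p hp => ?_) ?_ (fun t ht => ?_)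
    · rw [show B + ρ + 1 + p = B + (ρ + 1 + p) by omega]
      exact hτ.hasBlockAt_add_eq_one hB (by omega)
    · rw [show B + ρ + 1 + (2 ^ s - (ρ + 1) - 1) = B + (2 ^ s - 1) by omega]
      exact hτ.hasBlockAt_last hB
    · rw [show B + ρ + 1 + (2 ^ s - (ρ + 1) + t) = B + 2 ^ s + t by omega]
      exact hτ.hasBlockAt_add_eq_one hB' (by omega)
  · refine hτ.seqLt_of_tmSuffix_lastDec (s := s) (r := ρ + 1) (by omega) (by omega) hρ'
      (fun p hp => ?_) ?_
    · have := hτ.hasBlockAt_add_eq_one hB (x := ρ + 1 + p) (by omega)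
      rw [show B + ρ + 1 + p = B + (ρ + 1 + p) by omega]
      omega
    · rw [show B + ρ + 1 + (2 ^ s - (ρ + 1) - 1) = B + (2 ^ s - 1) by omega,
        hτ.hasBlockAt_last hB]

end IsThueMorse

theorem List.getD_flatten_replicate_mul_add {w : List ℕ} {k c x : ℕ} (hc : c < k)
    (hx : x < w.length) :
    ((List.replicate k w).flatten).getD (w.length * c + x) 0 = w.getD x 0 := by
  induction c generalizing k with
  | zero =>
    obtain ⟨k, rfl⟩ : ∃ k', k = k' + 1 := ⟨k - 1, by omega⟩
    rw [List.replicate_succ, List.flatten_cons, mul_zero, zero_add, List.getD_append _ _ _ _ hx]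
  | succ c ih =>
    obtain ⟨k, rfl⟩ : ∃ k', k = k' + 1 := ⟨k - 1, by omega⟩
    rw [List.replicate_succ, List.flatten_cons, List.getD_append_right _ _ _ _ (by nlinarith),
      show w.length * (c + 1) + x - w.length = w.length * c + x by rw [mul_add]; omega]
    exact ih (by omega)

@[simp] theorem length_tmPrefix (τ : ℕ → ℕ) (m : ℕ) : (tmPrefix τ m).length = m := by
  simp [tmPrefix]

theorem prefPeriodic_le {p w : List ℕ} {b : ℕ} (hp : ∀ a ∈ p, a ≤ b) (hw : ∀ a ∈ w, a ≤ b)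
    (j : ℕ) : prefPeriodic p w j ≤ b := by
  have hget : ∀ {l : List ℕ}, (∀ a ∈ l, a ≤ b) → ∀ i, l.getD i 0 ≤ b := fun {l} hl i => by
    rcases lt_or_ge i l.length with hi | hi
    · rw [List.getD_eq_getElem _ _ hi]; exact hl _ (List.getElem_mem hi)
    · rw [List.getD_eq_default _ _ hi]; exact Nat.zero_le b
  unfold prefPeriodic
  split
  exacts [hget hp _, hget hw _]

namespace IsThueMorse

variable {τ : ℕ → ℕ} (hτ : IsThueMorse τ) {μ k : ℕ}
include hτ

theorem lastInc_reflect_tmPrefix (l : ℕ) :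
    lastInc (reflect (tmPrefix τ (2 ^ l))) =
      (List.range (2 ^ l)).map fun x => τ (2 ^ l + x + 1) := by
  obtain ⟨L, hL⟩ : ∃ L, 2 ^ l = L + 1 := ⟨2 ^ l - 1, (Nat.sub_add_cancel Nat.one_le_two_pow).symm⟩
  have hlast : 1 - τ (2 ^ l) + 1 = τ (2 ^ l + L + 1) := by
    rw [hτ.two_pow, show 2 ^ l + L + 1 = 2 ^ (l + 1) by rw [pow_succ]; omega, hτ.two_pow]
  rw [hL, tmPrefix, reflect, List.range_succ, List.map_append, List.map_append, List.map_append,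
    lastInc, List.map_singleton, List.map_singleton, List.dropLast_concat, List.getLastD_concat,
    List.map_singleton, List.map_map, ← hL, hlast]
  congr 1
  refine List.map_congr_left fun x hx => ?_
  have := hτ.two_pow_add l (x + 1) (by simp at hx; omega)
  rw [← add_assoc] at this
  simp only [Function.comp_apply]
  omega

theorem stmt8Seq_eq :
    stmt8Seq τ (μ + 2) k = prefPeriodic (tmPrefix τ (2 ^ μ) ++
      (List.replicate k ((List.range (2 ^ μ)).map fun x => τ (2 ^ μ + x + 1))).flatten)
      ((List.range (2 ^ (μ + 1))).map fun x => τ (2 ^ (μ + 1) + x + 1)) := by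
  rw [stmt8Seq, Nat.add_sub_cancel, show μ + 2 - 1 = μ + 1 by omega,
    hτ.lastInc_reflect_tmPrefix, hτ.lastInc_reflect_tmPrefix]

theorem stmt8Seq_of_lt {j : ℕ} (hj : j < 2 ^ μ) : stmt8Seq τ (μ + 2) k j = τ (j + 1) := by
  rw [hτ.stmt8Seq_eq, prefPeriodic, if_pos (by simp; omega),
    List.getD_append _ _ _ _ (by simpa)]
  simp [tmPrefix, hj]

theorem hasBlockAt_stmt8Seq_of_lt {c : ℕ} (hc : c < k) :
    HasBlockAt τ (stmt8Seq τ (μ + 2) k) (2 ^ μ + 2 ^ μ * c) μ := by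
  intro x hx
  have hck : 2 ^ μ * c + x < k * 2 ^ μ := by nlinarith
  have hblock := List.getD_flatten_replicate_mul_add
    (w := (List.range (2 ^ μ)).map fun x => τ (2 ^ μ + x + 1)) hc (x := x) (by simpa)
  simp only [List.length_map, List.length_range] at hblock
  rw [hτ.stmt8Seq_eq, prefPeriodic, if_pos (by simp; omega),
    List.getD_append_right _ _ _ _ (by simp; omega), length_tmPrefix,
    show 2 ^ μ + 2 ^ μ * c + x - 2 ^ μ = 2 ^ μ * c + x by omega, hblock]
  simp [hx]

theorem hasBlockAt_stmt8Seq_periodic (P : ℕ) :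
    HasBlockAt τ (stmt8Seq τ (μ + 2) k) ((k + 1) * 2 ^ μ + 2 ^ (μ + 1) * P) (μ + 1) := by
  intro x hx
  rw [hτ.stmt8Seq_eq, prefPeriodic, if_neg (by simp; nlinarith)]
  have hmod : ((k + 1) * 2 ^ μ + 2 ^ (μ + 1) * P + x - (2 ^ μ + k * 2 ^ μ)) % 2 ^ (μ + 1) = x := by
    rw [show (k + 1) * 2 ^ μ + 2 ^ (μ + 1) * P + x - (2 ^ μ + k * 2 ^ μ) = x + 2 ^ (μ + 1) * P by
      rw [add_mul]; omega, Nat.add_mul_mod_self_left, Nat.mod_eq_of_lt hx]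
  simp [hmod, hx]

theorem exists_hasBlockAt_stmt8Seq {c : ℕ} (hc : c ≤ k) :
    ∃ s, μ ≤ s ∧ s ≤ μ + 1 ∧ HasBlockAt τ (stmt8Seq τ (μ + 2) k) (2 ^ μ + 2 ^ μ * c) s := by
  rcases hc.lt_or_eq with hc | rfl
  · exact ⟨μ, le_rfl, by omega, hτ.hasBlockAt_stmt8Seq_of_lt hc⟩
  · refine ⟨μ + 1, by omega, le_rfl, ?_⟩
    rw [show 2 ^ μ + 2 ^ μ * c = (c + 1) * 2 ^ μ + 2 ^ (μ + 1) * 0 by ring]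
    exact hτ.hasBlockAt_stmt8Seq_periodic 0

theorem stmt8Seq_le_one (i : ℕ) : stmt8Seq τ (μ + 2) k i ≤ 1 := by
  rw [hτ.stmt8Seq_eq]
  refine prefPeriodic_le ?_ ?_ i
  · simp only [tmPrefix, List.mem_append, List.mem_flatten, List.mem_replicate, List.mem_map]
    rintro a (⟨x, -, rfl⟩ | ⟨l, ⟨-, rfl⟩, ha⟩)
    · exact hτ.le_one _
    · obtain ⟨x, -, rfl⟩ := List.mem_map.mp ha
      exact hτ.le_one _
  · simp only [List.mem_map]
    rintro a ⟨x, -, rfl⟩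
    exact hτ.le_one _

theorem lexCondAt_stmt8Seq (i : ℕ) :
    LexCondAt (quasiGreedyTM τ (2 ^ (μ + 2))) (stmt8Seq τ (μ + 2) k) i := by
  have hpos : 0 < 2 ^ μ := Nat.two_pow_pos μ
  have hμ : 2 ^ (μ + 1) = 2 ^ μ + 2 ^ μ := by ring
  rcases lt_or_ge i (2 ^ μ) with hi | hi
  · obtain ⟨s, hs, hs', hB⟩ := hτ.exists_hasBlockAt_stmt8Seq (μ := μ) (Nat.zero_le k)
    rw [mul_zero, add_zero] at hB
    exact hτ.lexCondAt_of_lt_two_pow hs (by omega) (fun p hp => hτ.stmt8Seq_of_lt hp) hB hi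
  rcases lt_or_ge i ((k + 1) * 2 ^ μ) with hik | hik
  · obtain ⟨c, ρ, hρ, rfl⟩ : ∃ c ρ, ρ < 2 ^ μ ∧ i = 2 ^ μ + 2 ^ μ * c + ρ :=
      ⟨(i - 2 ^ μ) / 2 ^ μ, (i - 2 ^ μ) % 2 ^ μ, Nat.mod_lt _ hpos,
        by have := Nat.div_add_mod (i - 2 ^ μ) (2 ^ μ); omega⟩
    have hc : c < k := by nlinarith
    obtain ⟨s, hs, hs', hB'⟩ := hτ.exists_hasBlockAt_stmt8Seq (μ := μ) (c := c + 1) hc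
    rw [mul_add, mul_one, ← add_assoc] at hB'
    exact hτ.lexCondAt_of_hasBlockAt hs (by omega) (hτ.hasBlockAt_stmt8Seq_of_lt hc) hB' hρ
  · obtain ⟨P, ρ, hρ, rfl⟩ : ∃ P ρ, ρ < 2 ^ (μ + 1) ∧ i = (k + 1) * 2 ^ μ + 2 ^ (μ + 1) * P + ρ :=
      ⟨(i - (k + 1) * 2 ^ μ) / 2 ^ (μ + 1), (i - (k + 1) * 2 ^ μ) % 2 ^ (μ + 1),
        Nat.mod_lt _ (by omega),
        by have := Nat.div_add_mod (i - (k + 1) * 2 ^ μ) (2 ^ (μ + 1)); omega⟩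
    have hB' := hτ.hasBlockAt_stmt8Seq_periodic (μ := μ) (k := k) (P + 1)
    rw [mul_add, mul_one, ← add_assoc] at hB'
    exact hτ.lexCondAt_of_hasBlockAt le_rfl (by omega) (hτ.hasBlockAt_stmt8Seq_periodic P) hB' hρ

end IsThueMorse

/-- For `n ≥ 2` and every `k ≥ 0`, the sequence `τ_1⋯τ_{2^{n-2}} a^k b^∞`
belongs to `U_{q_n}'`. -/
theorem stmt8_mem_USeq (τ : ℕ → ℕ) (hτ : IsThueMorse τ)
    (Q : ℕ → ℝ) (hQ : IsBaseSeq τ Q) (n : ℕ) (hn : 2 ≤ n) (k : ℕ) :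
    stmt8Seq τ n k ∈ USeq (Q n) := by
  obtain ⟨μ, rfl⟩ : ∃ μ, n = μ + 2 := ⟨n - 2, by omega⟩
  obtain ⟨hq, -, heq⟩ := hQ.2 (μ + 2) (by omega)
  exact mem_USeq_of_lexCondAt hq (hτ.quasiGreedyTM_le_one _) (hτ.seqVal_quasiGreedyTM hq heq).le
    (hτ.exists_quasiGreedyTM_eq_one (by omega)) hτ.stmt8Seq_le_one hτ.lexCondAt_stmt8Seq
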